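/- Let U be a unitary N×N matrix with μ = max_{i,j} |U_{ij}|, and f̂ = U* f. Define the sparsity s_p(f) = ‖f‖_2/‖f‖_p for 1 ≤ p ≤ 2 and s_p(f) = ‖f‖_p/‖f‖_2 for 2 < p ≤ ∞. Then for conjugate exponents p, q (1/p + 1/q = 1) and any nonzero f in C^N, s_p(f) · s_q(f̂) ≤ μ^{|1 - 2/q|}. -/

import Mathlib

open Finset Matrix ENNReal

noncomputable def lpnormE {ι : Type*} [Fintype ι] (p : ℝ≥0∞) (f : ι → ℂ) : ℝ :=
  if p = ⊤ then ⨆ i, ‖f i‖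
  else (∑ i, ‖f i‖ ^ p.toReal) ^ (1 / p.toReal)

noncomputable def spars {ι : Type*} [Fintype ι] (p : ℝ≥0∞) (f : ι → ℂ) : ℝ :=
  if p ≤ 2 then lpnormE 2 f / lpnormE p f else lpnormE p f / lpnormE 2 f

-- Parseval for unitary matrices
private lemma l2_mulVec {N : ℕ} {A : Matrix (Fin N) (Fin N) ℂ}
    (hA : A ∈ Matrix.unitaryGroup (Fin N) ℂ) (w : Fin N → ℂ) :
    ∑ k, ‖A.mulVec w k‖ ^ (2:ℕ) = ∑ j, ‖w j‖ ^ (2:ℕ) := by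
  have key : star (A.mulVec w) ⬝ᵥ (A.mulVec w) = star w ⬝ᵥ w := by
    rw [Matrix.star_mulVec, Matrix.dotProduct_mulVec, Matrix.vecMul_vecMul,
      ← Matrix.star_eq_conjTranspose, (Matrix.mem_unitaryGroup_iff'.mp hA), Matrix.vecMul_one]
  have habs : ∀ v : Fin N → ℂ, star v ⬝ᵥ v = ((∑ i, ‖v i‖ ^ (2:ℕ) : ℝ) : ℂ) := by
    intro v
    simp only [dotProduct, Pi.star_apply, Complex.star_def, Complex.sq_norm]
    push_cast
    congr 1; ext i
    rw [mul_comm, Complex.mul_conj]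
  have := key
  rw [habs, habs] at this
  exact_mod_cast congrArg Complex.re this

noncomputable def phiz (c : ℝ) (x : ℂ) (z : ℂ) : ℂ :=
  if x = 0 then 0 else
    Complex.exp (((c * Real.log (‖x‖) : ℝ) : ℂ) * (1 + z)) * (x / ((‖x‖ : ℝ) : ℂ))

private lemma phiz_abs (c : ℝ) {x : ℂ} (hx : x ≠ 0) (z : ℂ) :
    ‖phiz c x z‖ = ‖x‖ ^ (c * (1 + z.re)) := by
  have hx' : (0:ℝ) < ‖x‖ := norm_pos_iff.mpr hx
  rw [phiz, if_neg hx, norm_mul, Complex.norm_exp, norm_div, Complex.norm_real, Real.norm_eq_abs,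
    _root_.abs_of_pos hx', div_self hx'.ne', mul_one, Complex.re_ofReal_mul,
    Real.rpow_def_of_pos hx']
  congr 1
  simp only [Complex.add_re, Complex.one_re]
  ring

private lemma phiz_diff (c : ℝ) (x : ℂ) : Differentiable ℂ (phiz c x) := by
  unfold phiz
  by_cases hx : x = 0
  · simp [hx]
  · simp only [if_neg hx]
    exact (((differentiable_const _).mul ((differentiable_const (1:ℂ)).add
      differentiable_id)).cexp).mul (differentiable_const _)

private lemma phiz_abs_le (c : ℝ) (x : ℂ) {z : ℂ} (hz : z.re ∈ Set.Icc (0:ℝ) 1) :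
    ‖phiz c x z‖ ≤ Real.exp (|c * Real.log (‖x‖)| * 2) := by
  by_cases hx : x = 0
  · simp [phiz, hx]
  · rw [phiz_abs c hx]
    have hx' : (0:ℝ) < ‖x‖ := norm_pos_iff.mpr hx
    rw [Real.rpow_def_of_pos hx']
    apply Real.exp_le_exp.mpr
    have h1 : Real.log (‖x‖) * (c * (1 + z.re)) = (c * Real.log (‖x‖)) * (1 + z.re) := by ring
    rw [h1]
    calc (c * Real.log (‖x‖)) * (1 + z.re)
        ≤ |(c * Real.log (‖x‖)) * (1 + z.re)| := le_abs_self _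
      _ = |c * Real.log (‖x‖)| * |1 + z.re| := abs_mul _ _
      _ ≤ |c * Real.log (‖x‖)| * 2 := by
          apply mul_le_mul_of_nonneg_left _ (abs_nonneg _)
          rw [abs_of_nonneg (by linarith [hz.1])]
          linarith [hz.2]

private lemma phiz_at (c : ℝ) (x : ℂ) {θ : ℝ} (hθ : c * (1 + θ) = 1) :
    phiz c x ((θ:ℝ):ℂ) = x := by
  by_cases hx : x = 0
  · simp [phiz, hx]
  · have hx' : (0:ℝ) < ‖x‖ := norm_pos_iff.mpr hx
    rw [phiz, if_neg hx]
    have hre : (c * Real.log (‖x‖)) * (1 + θ) = Real.log (‖x‖) := by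
      linear_combination Real.log (‖x‖) * hθ
    have : ((c * Real.log (‖x‖) : ℝ) : ℂ) * (1 + (θ:ℂ)) =
        ((Real.log (‖x‖) : ℝ) : ℂ) := by
      calc ((c * Real.log (‖x‖) : ℝ) : ℂ) * (1 + (θ:ℂ))
          = (((c * Real.log (‖x‖)) * (1 + θ) : ℝ) : ℂ) := by push_cast; ring
        _ = _ := by rw [hre]
    rw [this, ← Complex.ofReal_exp, Real.exp_log hx']
    rw [mul_comm]
    exact div_mul_cancel₀ x (by exact_mod_cast hx'.ne')

-- Cauchy-Schwarz
private lemma cs_bound {N : ℕ} (x y : Fin N → ℂ) :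
    ‖∑ k, x k * y k‖ ≤
      Real.sqrt (∑ k, ‖x k‖ ^ (2:ℕ)) * Real.sqrt (∑ k, ‖y k‖ ^ (2:ℕ)) := by
  calc ‖∑ k, x k * y k‖ ≤ ∑ k, ‖x k * y k‖ := by
        exact norm_sum_le _ _
    _ = ∑ k, ‖x k‖ * ‖y k‖ := by simp [norm_mul]
    _ ≤ Real.sqrt (∑ k, ‖x k‖ ^ (2:ℕ)) * Real.sqrt (∑ k, ‖y k‖ ^ (2:ℕ)) := by
        have h := Finset.sum_mul_sq_le_sq_mul_sq Finset.univ (fun k => ‖x k‖)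
          (fun k => ‖y k‖)
        have hnn : (0:ℝ) ≤ ∑ k, ‖x k‖ * ‖y k‖ :=
          Finset.sum_nonneg fun k _ => by positivity
        calc ∑ k, ‖x k‖ * ‖y k‖
            = Real.sqrt ((∑ k, ‖x k‖ * ‖y k‖)^2) := (Real.sqrt_sq hnn).symm
          _ ≤ Real.sqrt ((∑ k, ‖x k‖ ^ (2:ℕ)) * ∑ k, ‖y k‖ ^ (2:ℕ)) :=
              Real.sqrt_le_sqrt h
          _ = _ := Real.sqrt_mul (Finset.sum_nonneg fun k _ => by positivity) _

-- scaling
private lemma rpow_sum_scale {N : ℕ} (x : Fin N → ℝ) (hx : ∀ i, 0 ≤ x i) {t r : ℝ}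
    (ht : 0 ≤ t) (hr : 0 < r) :
    (∑ i, (t * x i) ^ r) ^ (1/r) = t * (∑ i, x i ^ r) ^ (1/r) := by
  have h1 : ∀ i, (t * x i) ^ r = t ^ r * x i ^ r := fun i => Real.mul_rpow ht (hx i)
  simp_rw [h1]
  rw [← Finset.mul_sum, Real.mul_rpow (Real.rpow_nonneg ht r)
    (Finset.sum_nonneg fun i _ => Real.rpow_nonneg (hx i) r), ← Real.rpow_mul ht,
    mul_one_div, div_self hr.ne', Real.rpow_one]

private lemma phiz_sq_sum {N : ℕ} (c : ℝ) (w : Fin N → ℂ) {z : ℂ} {e : ℝ} (he : 0 < e)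
    (hce : c * (1 + z.re) * 2 = e) :
    ∑ j, ‖phiz c (w j) z‖ ^ (2:ℕ) = ∑ j, ‖w j‖ ^ e := by
  refine Finset.sum_congr rfl fun j _ => ?_
  by_cases hx : w j = 0
  · simp [phiz, hx, Real.zero_rpow he.ne']
  · rw [phiz_abs c hx, ← Real.rpow_natCast (‖w j‖ ^ (c * (1 + z.re))) 2,
      ← Real.rpow_mul (norm_nonneg _)]
    norm_num [hce]

private lemma phiz_sum {N : ℕ} (c : ℝ) (w : Fin N → ℂ) {z : ℂ} {e : ℝ} (he : 0 < e)
    (hce : c * (1 + z.re) = e) :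
    ∑ j, ‖phiz c (w j) z‖ = ∑ j, ‖w j‖ ^ e := by
  refine Finset.sum_congr rfl fun j _ => ?_
  by_cases hx : w j = 0
  · simp [phiz, hx, Real.zero_rpow he.ne']
  · rw [phiz_abs c hx, hce]


set_option maxHeartbeats 1000000 in
private lemma hy_core_norm {N : ℕ} (A : Matrix (Fin N) (Fin N) ℂ)
    (hA : A ∈ Matrix.unitaryGroup (Fin N) ℂ)
    {μ : ℝ} (hμ0 : 0 < μ) (hμ : ∀ i j, ‖A i j‖ ≤ μ)
    {pr qr : ℝ} (h2q : 2 ≤ qr) (hpq : 1/pr + 1/qr = 1)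
    (g : Fin N → ℂ) (hg1 : ∑ j, ‖g j‖ ^ pr = 1) :
    (∑ k, ‖A.mulVec g k‖ ^ qr) ^ (1/qr) ≤ μ ^ (1 - 2/qr) := by
  have hq0 : (0:ℝ) < qr := by linarith
  have hinvq : 1/qr ≤ 1/2 := by
    rw [div_le_div_iff₀ hq0 two_pos]; linarith
  have hinvq0 : 0 < 1/qr := by positivity
  have hinvp : 1/pr = 1 - 1/qr := by linarith
  have hinvp0 : 0 < 1/pr := by rw [hinvp]; linarith
  have hp0 : (0:ℝ) < pr := one_div_pos.mp hinvp0
  have hpr0 : pr ≠ 0 := hp0.ne'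
  have hqr0 : qr ≠ 0 := hq0.ne'
  have hkey : pr * (qr - 1) = qr := by
    have h' := hpq
    field_simp at h'
    nlinarith [h']
  set θ : ℝ := 1 - 2/qr with hθdef
  have hθ0 : 0 ≤ θ := by
    have : 2/qr ≤ 1 := by rw [div_le_one hq0]; linarith
    simp [hθdef]; linarith
  have hθ1 : θ ≤ 1 := by
    have : 0 ≤ 2/qr := by positivity
    simp [hθdef]; linarith
  set v : Fin N → ℂ := A.mulVec g with hvdef
  set Q : ℝ := ∑ k, ‖v k‖ ^ qr with hQdef
  have hQnn : 0 ≤ Q := Finset.sum_nonneg fun k _ => Real.rpow_nonneg (norm_nonneg _) _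
  by_cases hQ : Q = 0
  · rw [hQ, Real.zero_rpow hinvq0.ne']
    exact (Real.rpow_pos_of_pos hμ0 _).le
  have hQpos : 0 < Q := lt_of_le_of_ne hQnn (Ne.symm hQ)
  set L : ℝ := Q ^ (1/qr) with hLdef
  -- test vector
  set h : Fin N → ℂ := fun k =>
      (((‖v k‖) ^ (qr - 2) / Q ^ (1/pr) : ℝ) : ℂ) * (starRingEnd ℂ) (v k) with hhdef
  have habs_h : ∀ k, ‖h k‖ = (‖v k‖) ^ (qr - 1) / Q ^ (1/pr) := by
    intro k
    by_cases hv : v k = 0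
    · have hzero : h k = 0 := by simp only [hhdef]; rw [hv]; simp
      rw [hzero, norm_zero, hv, norm_zero,
        Real.zero_rpow (show qr - 1 ≠ 0 by intro hc; linarith), zero_div]
    · have hva : 0 < ‖v k‖ := norm_pos_iff.mpr hv
      simp only [hhdef, norm_mul, Complex.norm_real, Real.norm_eq_abs, Complex.norm_conj]
      rw [abs_of_nonneg (div_nonneg (Real.rpow_nonneg (norm_nonneg _) _)
        (Real.rpow_nonneg hQnn _))]
      rw [div_mul_eq_mul_div, ← Real.rpow_add_one hva.ne' (qr - 2)]
      norm_num
      ring_nf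
  have hh1 : ∑ k, ‖h k‖ ^ pr = 1 := by
    have hterm : ∀ k, ‖h k‖ ^ pr = ‖v k‖ ^ qr / Q := by
      intro k
      rw [habs_h k, Real.div_rpow (Real.rpow_nonneg (norm_nonneg _) _)
        (Real.rpow_nonneg hQnn _), ← Real.rpow_mul (norm_nonneg _),
        ← Real.rpow_mul hQnn, mul_comm (qr-1) pr, hkey, one_div_mul_cancel hpr0,
        Real.rpow_one]
    rw [Finset.sum_congr rfl fun k _ => hterm k, ← Finset.sum_div, ← hQdef,
      div_self hQpos.ne']
  have hvh : ∑ k, v k * h k = ((L : ℝ) : ℂ) := by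
    have hterm : ∀ k, v k * h k = ((‖v k‖ ^ qr / Q ^ (1/pr) : ℝ) : ℂ) := by
      intro k
      by_cases hv : v k = 0
      · simp only [hhdef]
        rw [hv]
        simp [Real.zero_rpow hqr0]
      · have hva : 0 < ‖v k‖ := norm_pos_iff.mpr hv
        have hpow : ‖v k‖ ^ (qr-2) * ‖v k‖ ^ (2:ℕ) =
            ‖v k‖ ^ qr := by
          rw [← Real.rpow_natCast (‖v k‖) 2, ← Real.rpow_add hva]
          norm_num
        simp only [hhdef]
        calc v k * (((‖v k‖ ^ (qr - 2) / Q ^ (1/pr) : ℝ) : ℂ) *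
              (starRingEnd ℂ) (v k))
            = ((‖v k‖ ^ (qr - 2) / Q ^ (1/pr) : ℝ) : ℂ) *
              (v k * (starRingEnd ℂ) (v k)) := by ring
          _ = ((‖v k‖ ^ (qr - 2) / Q ^ (1/pr) : ℝ) : ℂ) *
              ((Complex.normSq (v k) : ℝ) : ℂ) := by rw [Complex.mul_conj]
          _ = (((‖v k‖ ^ (qr - 2) * ‖v k‖ ^ (2:ℕ)) / Q ^ (1/pr) : ℝ) : ℂ) := by
              rw [← Complex.normSq_eq_norm_sq]; push_cast; ring
          _ = _ := by rw [hpow]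
    rw [Finset.sum_congr rfl fun k _ => hterm k, ← Complex.ofReal_sum, ← Finset.sum_div,
      ← hQdef]
    congr 1
    have h1q : (1:ℝ) - 1/pr = 1/qr := by linarith
    rw [hLdef, ← h1q, Real.rpow_sub hQpos, Real.rpow_one]
  -- the analytic function
  set c : ℝ := pr/2 with hcdef
  have hcθ : c * (1 + θ) = 1 := by
    have hppr : pr * (1/pr) = 1 := mul_one_div_cancel hpr0
    calc c * (1 + θ) = pr * (1 - 1/qr) := by rw [hθdef, hcdef]; ring
      _ = pr * (1/pr) := by rw [hinvp]
      _ = 1 := hppr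
  set F : ℂ → ℂ := fun z =>
    ∑ k, (∑ j, A k j * phiz c (g j) z) * phiz c (h k) z with hFdef
  have hFmul : ∀ z, F z = ∑ k, (A.mulVec (fun j => phiz c (g j) z)) k * phiz c (h k) z := by
    intro z
    refine Finset.sum_congr rfl fun k _ => ?_
    simp [Matrix.mulVec, dotProduct]
  have hdF : Differentiable ℂ F := by
    apply Differentiable.fun_sum
    intro k _
    exact (Differentiable.fun_sum fun j _ =>
      (differentiable_const _).mul (phiz_diff _ _)).mul (phiz_diff _ _)
  have hB : BddAbove ((norm ∘ F) '' Complex.HadamardThreeLines.verticalClosedStrip 0 1) := by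
    refine ⟨∑ k, (∑ j, μ * Real.exp (|c * Real.log (‖g j‖)| * 2)) *
      Real.exp (|c * Real.log (‖h k‖)| * 2), ?_⟩
    rintro x ⟨z, hz, rfl⟩
    have hzre : z.re ∈ Set.Icc (0:ℝ) 1 := hz
    simp only [Function.comp_apply]
    calc ‖F z‖
        ≤ ∑ k, ‖(∑ j, A k j * phiz c (g j) z) * phiz c (h k) z‖ :=
          norm_sum_le _ _
      _ ≤ ∑ k, (∑ j, μ * Real.exp (|c * Real.log (‖g j‖)| * 2)) *
            Real.exp (|c * Real.log (‖h k‖)| * 2) := by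
          refine Finset.sum_le_sum fun k _ => ?_
          rw [norm_mul]
          have h1 : ‖∑ j, A k j * phiz c (g j) z‖ ≤
              ∑ j, μ * Real.exp (|c * Real.log (‖g j‖)| * 2) := by
            refine (norm_sum_le _ _).trans (Finset.sum_le_sum fun j _ => ?_)
            rw [norm_mul]
            exact mul_le_mul (hμ k j) (phiz_abs_le c (g j) hzre) (norm_nonneg _)
              hμ0.le
          exact mul_le_mul h1 (phiz_abs_le c (h k) hzre) (norm_nonneg _)
            (Finset.sum_nonneg fun j _ => by positivity)
  have ha : ∀ z ∈ Complex.re ⁻¹' {0}, ‖F z‖ ≤ 1 := by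
    intro z hz
    have hzre : z.re = 0 := hz
    rw [hFmul z]
    refine (cs_bound _ _).trans ?_
    rw [l2_mulVec hA]
    have e1 : ∑ j, ‖phiz c (g j) z‖ ^ (2:ℕ) = 1 := by
      rw [phiz_sq_sum c g hp0 (by rw [hzre, hcdef]; ring), hg1]
    have e2 : ∑ k, ‖phiz c (h k) z‖ ^ (2:ℕ) = 1 := by
      rw [phiz_sq_sum c h hp0 (by rw [hzre, hcdef]; ring), hh1]
    rw [e1, e2]
    simp
  have hb : ∀ z ∈ Complex.re ⁻¹' {1}, ‖F z‖ ≤ μ := by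
    intro z hz
    have hzre : z.re = 1 := hz
    have e1 : ∑ j, ‖phiz c (g j) z‖ = 1 := by
      rw [phiz_sum c g hp0 (by rw [hzre, hcdef]; ring), hg1]
    have e2 : ∑ k, ‖phiz c (h k) z‖ = 1 := by
      rw [phiz_sum c h hp0 (by rw [hzre, hcdef]; ring), hh1]
    calc ‖F z‖
        ≤ ∑ k, ‖(∑ j, A k j * phiz c (g j) z) * phiz c (h k) z‖ :=
          norm_sum_le _ _
      _ ≤ ∑ k, μ * ‖phiz c (h k) z‖ := by
          refine Finset.sum_le_sum fun k _ => ?_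
          rw [norm_mul]
          refine mul_le_mul ?_ le_rfl (norm_nonneg _) hμ0.le
          refine (norm_sum_le _ _).trans ?_
          calc ∑ j, ‖A k j * phiz c (g j) z‖
              ≤ ∑ j, μ * ‖phiz c (g j) z‖ := by
                refine Finset.sum_le_sum fun j _ => ?_
                rw [norm_mul]
                exact mul_le_mul_of_nonneg_right (hμ k j) (norm_nonneg _)
            _ = μ := by rw [← Finset.mul_sum, e1, mul_one]
      _ = μ := by rw [← Finset.mul_sum, e2, mul_one]
  -- value at θ
  have hFθ : F ((θ:ℝ):ℂ) = ((L:ℝ):ℂ) := by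
    rw [hFdef]
    simp only [phiz_at c _ hcθ]
    rw [← hvh]
    refine Finset.sum_congr rfl fun k _ => ?_
    congr 1
  have hz : ((θ:ℝ):ℂ) ∈ Complex.HadamardThreeLines.verticalClosedStrip 0 1 := by
    simp only [Complex.HadamardThreeLines.verticalClosedStrip, Set.mem_preimage,
      Complex.ofReal_re, Set.mem_Icc]
    exact ⟨hθ0, hθ1⟩
  have hada := Complex.HadamardThreeLines.norm_le_interp_of_mem_verticalClosedStrip₀₁' F
    hz (hdF.diffContOnCl) hB ha hb
  rw [hFθ, Complex.norm_real, Real.norm_eq_abs, Complex.ofReal_re,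
    Real.one_rpow, one_mul, abs_of_nonneg (Real.rpow_nonneg hQnn _)] at hada
  exact hada

private lemma hy_core {N : ℕ} (A : Matrix (Fin N) (Fin N) ℂ)
    (hA : A ∈ Matrix.unitaryGroup (Fin N) ℂ)
    {μ : ℝ} (hμ0 : 0 < μ) (hμ : ∀ i j, ‖A i j‖ ≤ μ)
    {pr qr : ℝ} (h2q : 2 ≤ qr) (hpq : 1/pr + 1/qr = 1)
    (g : Fin N → ℂ) :
    (∑ k, ‖A.mulVec g k‖ ^ qr) ^ (1/qr) ≤
      μ ^ (1 - 2/qr) * (∑ j, ‖g j‖ ^ pr) ^ (1/pr) := by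
  have hq0 : (0:ℝ) < qr := by linarith
  have hinvq0 : 0 < 1/qr := by positivity
  have hinvq : 1/qr ≤ 1/2 := by
    rw [div_le_div_iff₀ hq0 two_pos]; linarith
  have hinvp : 1/pr = 1 - 1/qr := by linarith
  have hinvp0 : 0 < 1/pr := by rw [hinvp]; linarith
  have hp0 : (0:ℝ) < pr := one_div_pos.mp hinvp0
  set S : ℝ := ∑ j, ‖g j‖ ^ pr with hSdef
  have hSnn : 0 ≤ S := Finset.sum_nonneg fun j _ => Real.rpow_nonneg (norm_nonneg _) _
  by_cases hS : S = 0
  · have hg0 : g = 0 := by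
      funext j
      by_contra hgj
      have h1 : 0 < ‖g j‖ ^ pr :=
        Real.rpow_pos_of_pos (norm_pos_iff.mpr hgj) _
      have h2 : ‖g j‖ ^ pr ≤ S :=
        Finset.single_le_sum (fun i _ => Real.rpow_nonneg (norm_nonneg _) _)
          (Finset.mem_univ j)
      rw [hS] at h2
      linarith
    rw [hg0, hS]
    simp only [Matrix.mulVec_zero, Pi.zero_apply, map_zero, norm_zero,
      Real.zero_rpow hq0.ne', Finset.sum_const_zero, Real.zero_rpow hinvq0.ne',
      Real.zero_rpow hinvp0.ne', mul_zero, le_refl]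
  have hSpos : 0 < S := lt_of_le_of_ne hSnn (Ne.symm hS)
  set t : ℝ := S ^ (1/pr) with htdef
  have ht : 0 < t := Real.rpow_pos_of_pos hSpos _
  have htpr : t ^ pr = S := by
    rw [htdef, ← Real.rpow_mul hSnn, one_div_mul_cancel hp0.ne', Real.rpow_one]
  have hnorm : ∑ j, ‖(((t⁻¹:ℝ):ℂ)) * g j‖ ^ pr = 1 := by
    have : ∀ j, ‖(((t⁻¹:ℝ):ℂ)) * g j‖ ^ pr =
        (t⁻¹) ^ pr * ‖g j‖ ^ pr := by
      intro j
      rw [norm_mul, Complex.norm_real, Real.norm_eq_abs, abs_of_pos (inv_pos.mpr ht),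
        Real.mul_rpow (inv_pos.mpr ht).le (norm_nonneg _)]
    rw [Finset.sum_congr rfl fun j _ => this j, ← Finset.mul_sum, ← hSdef,
      Real.inv_rpow ht.le, htpr, inv_mul_cancel₀ hSpos.ne']
  have happ := hy_core_norm A hA hμ0 hμ h2q hpq (fun j => ((t⁻¹:ℝ):ℂ) * g j) hnorm
  have hmv : A.mulVec (fun j => ((t⁻¹:ℝ):ℂ) * g j) =
      fun k => ((t⁻¹:ℝ):ℂ) * (A.mulVec g) k := by
    have h1 : (fun j => ((t⁻¹:ℝ):ℂ) * g j) = (((t⁻¹:ℝ):ℂ) • g) := rfl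
    rw [h1, Matrix.mulVec_smul]
    rfl
  rw [hmv] at happ
  have habs : ∀ k, ‖((t⁻¹:ℝ):ℂ) * (A.mulVec g) k‖ =
      t⁻¹ * ‖(A.mulVec g) k‖ := by
    intro k
    rw [norm_mul, Complex.norm_real, Real.norm_eq_abs, abs_of_pos (inv_pos.mpr ht)]
  rw [Finset.sum_congr rfl fun k _ => by rw [habs k]] at happ
  rw [rpow_sum_scale (fun k => ‖(A.mulVec g) k‖)
    (fun k => norm_nonneg _) (inv_pos.mpr ht).le hq0] at happ
  calc (∑ k, ‖A.mulVec g k‖ ^ qr) ^ (1/qr)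
      = t * (t⁻¹ * (∑ k, ‖A.mulVec g k‖ ^ qr) ^ (1/qr)) := by
        rw [← mul_assoc, mul_inv_cancel₀ ht.ne', one_mul]
    _ ≤ t * (μ ^ (1 - 2/qr)) := by
        exact mul_le_mul_of_nonneg_left happ ht.le
    _ = μ ^ (1 - 2/qr) * t := mul_comm _ _

private lemma hy_top {N : ℕ} (A : Matrix (Fin N) (Fin N) ℂ)
    {μ : ℝ} (hμ : ∀ i j, ‖A i j‖ ≤ μ) (g : Fin N → ℂ) (k : Fin N) :
    ‖A.mulVec g k‖ ≤ μ * ∑ j, ‖g j‖ := by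
  have h1 : A.mulVec g k = ∑ j, A k j * g j := by simp [Matrix.mulVec, dotProduct]
  rw [h1]
  refine (norm_sum_le _ _).trans ?_
  rw [Finset.mul_sum]
  refine Finset.sum_le_sum fun j _ => ?_
  rw [norm_mul]
  exact mul_le_mul_of_nonneg_right (hμ k j) (norm_nonneg _)

private lemma lpnormE_pos {N : ℕ} {f : Fin N → ℂ} (hf : f ≠ 0) {p : ℝ≥0∞} (hp : p ≠ 0) :
    0 < lpnormE p f := by
  obtain ⟨i0, hi0⟩ : ∃ i, f i ≠ 0 := Function.ne_iff.mp hf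
  by_cases hT : p = ⊤
  · rw [hT]
    simp only [lpnormE, reduceIte]
    exact lt_of_lt_of_le (norm_pos_iff.mpr hi0)
      (le_ciSup (f := fun i => ‖f i‖)
        (Set.Finite.bddAbove (Set.finite_range _)) i0)
  · simp only [lpnormE, if_neg hT]
    apply Real.rpow_pos_of_pos
    refine lt_of_lt_of_le (Real.rpow_pos_of_pos (norm_pos_iff.mpr hi0) p.toReal) ?_
    exact Finset.single_le_sum (f := fun i => ‖f i‖ ^ p.toReal)
      (fun i _ => Real.rpow_nonneg (norm_nonneg _) _) (Finset.mem_univ i0)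

private lemma lpnormE_two {N : ℕ} (f : Fin N → ℂ) :
    lpnormE 2 f = (∑ i, ‖f i‖ ^ (2:ℝ)) ^ (1/(2:ℝ)) := by
  simp only [lpnormE, if_neg (by norm_num : (2:ℝ≥0∞) ≠ ⊤)]
  norm_num

private lemma lpnormE_two_mulVec {N : ℕ} {A : Matrix (Fin N) (Fin N) ℂ}
    (hA : A ∈ Matrix.unitaryGroup (Fin N) ℂ) (w : Fin N → ℂ) :
    lpnormE 2 (A.mulVec w) = lpnormE 2 w := by
  rw [lpnormE_two, lpnormE_two]
  congr 1
  have hconv : ∀ x : ℝ, x ^ (2:ℝ) = x ^ (2:ℕ) := fun x => by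
    rw [← Real.rpow_natCast x 2]; norm_num
  simp_rw [hconv]
  exact l2_mulVec hA w


set_option maxHeartbeats 1000000 in
/-- Product of sparsity levels of a signal and its Fourier transform is bounded
by a power of the coherence. -/
theorem stmt6 {N : ℕ} (U : Matrix (Fin N) (Fin N) ℂ)
    (hU : U ∈ Matrix.unitaryGroup (Fin N) ℂ)
    (μ : ℝ) (hμ : μ = ⨆ q : Fin N × Fin N, ‖U q.1 q.2‖)
    (p q : ℝ≥0∞) (hpq : 1 / p + 1 / q = 1) (hp : 1 ≤ p)
    (f : Fin N → ℂ) (hf : f ≠ 0) :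
    spars p f * spars q (Uᴴ.mulVec f) ≤ μ ^ |1 - 2 / q.toReal| := by
  obtain ⟨i0, hi0⟩ : ∃ i, f i ≠ 0 := Function.ne_iff.mp hf
  haveI : Nonempty (Fin N) := ⟨i0⟩
  -- coherence facts
  have hbdd : BddAbove (Set.range fun q : Fin N × Fin N => ‖U q.1 q.2‖) :=
    Set.Finite.bddAbove (Set.finite_range _)
  have hμU : ∀ i j, ‖U i j‖ ≤ μ := fun i j => by
    rw [hμ]
    exact le_ciSup (f := fun q : Fin N × Fin N => ‖U q.1 q.2‖) hbdd (i, j)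
  have hμH : ∀ i j, ‖Uᴴ i j‖ ≤ μ := fun i j => by
    rw [Matrix.conjTranspose_apply, Complex.star_def, Complex.norm_conj]
    exact hμU j i
  have hUU : U * Uᴴ = 1 := by
    rw [← Matrix.star_eq_conjTranspose]; exact hU.2
  have hHU : Uᴴ * U = 1 := by
    rw [← Matrix.star_eq_conjTranspose]; exact hU.1
  have hrow : (U * Uᴴ) i0 i0 = 1 := by rw [hUU]; simp [Matrix.one_apply_eq]
  have hex : ∃ j, U i0 j ≠ 0 := by
    by_contra hc
    push_neg at hc
    rw [Matrix.mul_apply] at hrow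
    simp [hc] at hrow
  obtain ⟨j0, hj0⟩ := hex
  have hμ0 : 0 < μ := lt_of_lt_of_le (norm_pos_iff.mpr hj0) (hμU i0 j0)
  have hUH : Uᴴ ∈ Matrix.unitaryGroup (Fin N) ℂ := by
    rw [← Matrix.star_eq_conjTranspose]; exact Unitary.star_mem hU
  have hrec : U.mulVec (Uᴴ.mulVec f) = f := by
    rw [Matrix.mulVec_mulVec, hUU, Matrix.one_mulVec]
  set fh := Uᴴ.mulVec f with hfh
  have hfh0 : fh ≠ 0 := by
    intro hc
    apply hf
    rw [← hrec, hc, Matrix.mulVec_zero]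
  have hl2 : lpnormE 2 fh = lpnormE 2 f := lpnormE_two_mulVec hUH f
  -- exponent basics
  have hp0 : p ≠ 0 := by
    intro hc; rw [hc] at hp; simp at hp
  have hq0 : q ≠ 0 := by
    intro hc; rw [hc] at hpq; simp at hpq
  have hq1 : 1 ≤ q := by
    have h1 : 1/q ≤ 1 := by
      calc 1/q ≤ 1/p + 1/q := le_add_self
        _ = 1 := hpq
    rw [one_div] at h1
    exact ENNReal.inv_le_one.mp h1
  have htrGen : p ≠ ⊤ → q ≠ ⊤ → 1/p.toReal + 1/q.toReal = 1 := by
    intro hpt hqt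
    have h1 : (1/p) ≠ ⊤ := by simp [ENNReal.div_eq_top, hp0]
    have h2 : (1/q) ≠ ⊤ := by simp [ENNReal.div_eq_top, hq0]
    have := congrArg ENNReal.toReal hpq
    rwa [ENNReal.toReal_add h1 h2, ENNReal.toReal_div, ENNReal.toReal_div,
      ENNReal.toReal_one] at this
  -- positivity
  have hposp : 0 < lpnormE p f := lpnormE_pos hf hp0
  have hpos2f : 0 < lpnormE 2 f := lpnormE_pos hf (by norm_num)
  have hposq : 0 < lpnormE q fh := lpnormE_pos hfh0 hq0
  have hpos2fh : 0 < lpnormE 2 fh := by rw [hl2]; exact hpos2f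
  by_cases hple : p ≤ 2
  · by_cases hqle : q ≤ 2
    · -- p = q = 2
      have hptop : p ≠ ⊤ := by intro hc; rw [hc] at hple; simp at hple
      have hqtop : q ≠ ⊤ := by intro hc; rw [hc] at hqle; simp at hqle
      have htr := htrGen hptop hqtop
      have hptr0 : 0 < p.toReal := ENNReal.toReal_pos hp0 hptop
      have hqtr0 : 0 < q.toReal := ENNReal.toReal_pos hq0 hqtop
      have hptr2 : p.toReal ≤ 2 := by
        have := ENNReal.toReal_mono (by norm_num : (2:ℝ≥0∞) ≠ ⊤) hple
        simpa using this
      have hqtr2 : q.toReal ≤ 2 := by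
        have := ENNReal.toReal_mono (by norm_num : (2:ℝ≥0∞) ≠ ⊤) hqle
        simpa using this
      have hab : p.toReal + q.toReal = p.toReal * q.toReal := by
        field_simp at htr
        linarith
      have hpT : p.toReal = 2 := by nlinarith
      have hqT : q.toReal = 2 := by nlinarith
      have hp2 : p = 2 := by
        have h := (ENNReal.toReal_eq_toReal_iff' hptop (by norm_num : (2:ℝ≥0∞) ≠ ⊤)).mp
        apply h
        simpa using hpT
      have hq2 : q = 2 := by
        have h := (ENNReal.toReal_eq_toReal_iff' hqtop (by norm_num : (2:ℝ≥0∞) ≠ ⊤)).mp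
        apply h
        simpa using hqT
      rw [hp2, hq2]
      simp only [spars]
      rw [if_pos le_rfl]
      rw [div_self hpos2f.ne', div_self hpos2fh.ne', one_mul]
      have hE : |1 - 2/(2:ℝ≥0∞).toReal| = 0 := by norm_num
      rw [hE, Real.rpow_zero]
      simp
    · -- p ≤ 2 < q
      push_neg at hqle
      simp only [spars]
      rw [if_pos hple, if_neg (not_le.mpr hqle), hl2]
      have hprod : lpnormE 2 f / lpnormE p f * (lpnormE q fh / lpnormE 2 f) =
          lpnormE q fh / lpnormE p f := by
        field_simp
      rw [hprod, div_le_iff₀ hposp]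
      by_cases hqtop : q = ⊤
      · -- p = 1
        have hp1 : p = 1 := by
          rw [hqtop] at hpq
          simp only [ENNReal.div_top, add_zero] at hpq
          rw [one_div, ENNReal.inv_eq_one] at hpq
          exact hpq
        rw [hqtop, hp1]
        have hexp : |1 - 2/(⊤:ℝ≥0∞).toReal| = 1 := by
          simp
        rw [hexp, Real.rpow_one]
        have hlh : lpnormE ⊤ fh = ⨆ k, ‖fh k‖ := by
          simp only [lpnormE, reduceIte]
        have hl1 : lpnormE 1 f = ∑ j, ‖f j‖ := by
          simp only [lpnormE, if_neg (by norm_num : (1:ℝ≥0∞) ≠ ⊤), ENNReal.toReal_one]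
          norm_num
        rw [hlh, hl1]
        exact ciSup_le fun k => hy_top Uᴴ hμH f k
      · -- finite q, 2 < q
        have hptop : p ≠ ⊤ := by intro hc; rw [hc] at hple; simp at hple
        have htr := htrGen hptop hqtop
        have hq2r : (2:ℝ) ≤ q.toReal := by
          have := ENNReal.toReal_mono hqtop hqle.le
          simpa using this
        have hHY := hy_core Uᴴ hUH hμ0 hμH hq2r htr f
        rw [← hfh] at hHY
        have hexp : |1 - 2/q.toReal| = 1 - 2/q.toReal := by
          apply abs_of_nonneg
          have h1 : 2/q.toReal ≤ 1 := by
            rw [div_le_one (by linarith : (0:ℝ) < q.toReal)]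
            exact hq2r
          linarith
        rw [hexp]
        simp only [lpnormE, if_neg hqtop, if_neg hptop]
        exact hHY
  · -- 2 < p
    push_neg at hple
    have hqle : q ≤ 2 := by
      have h1 : 1/p ≤ 1/2 := by
        apply ENNReal.div_le_div_left
        exact hple.le
      have h2 : (1:ℝ≥0∞)/2 ≤ 1/q := by
        by_contra hcon
        push_neg at hcon
        have h3 : 1/p + 1/q < 1/2 + 1/2 :=
          ENNReal.add_lt_add_of_le_of_lt (by simp [ENNReal.div_eq_top, hp0]) h1 hcon
        rw [hpq, ENNReal.add_halves] at h3
        exact lt_irrefl _ h3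
      rw [one_div, one_div] at h2
      exact ENNReal.inv_le_inv.mp h2
    simp only [spars]
    rw [if_neg (not_le.mpr hple), if_pos hqle, hl2]
    have hprod : lpnormE p f / lpnormE 2 f * (lpnormE 2 f / lpnormE q fh) =
        lpnormE p f / lpnormE q fh := by
      field_simp
    rw [hprod, div_le_iff₀ hposq]
    by_cases hptop : p = ⊤
    · -- q = 1
      have hq1' : q = 1 := by
        rw [hptop] at hpq
        simp only [ENNReal.div_top, zero_add] at hpq
        rw [one_div, ENNReal.inv_eq_one] at hpq
        exact hpq
      rw [hptop, hq1']
      have hexp : |1 - 2/(1:ℝ≥0∞).toReal| = 1 := by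
        norm_num
      rw [hexp, Real.rpow_one]
      have hlh : lpnormE ⊤ f = ⨆ k, ‖f k‖ := by
        simp only [lpnormE, reduceIte]
      have hl1 : lpnormE 1 fh = ∑ j, ‖fh j‖ := by
        simp only [lpnormE, if_neg (by norm_num : (1:ℝ≥0∞) ≠ ⊤), ENNReal.toReal_one]
        norm_num
      rw [hlh, hl1]
      refine ciSup_le fun k => ?_
      have := hy_top U hμU fh k
      rw [hrec] at this
      exact this
    · -- finite p, 2 < p
      have hqtop : q ≠ ⊤ := by intro hc; rw [hc] at hqle; simp at hqle
      have htr := htrGen hptop hqtop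
      have hp2r : (2:ℝ) ≤ p.toReal := by
        have := ENNReal.toReal_mono hptop hple.le
        simpa using this
      have htr' : 1/q.toReal + 1/p.toReal = 1 := by linarith
      have hHY := hy_core U hU hμ0 hμU hp2r htr' fh
      rw [hrec] at hHY
      have hptr0 : 0 < p.toReal := by linarith
      have hqtr0 : 0 < q.toReal := ENNReal.toReal_pos hq0 hqtop
      have hexp : |1 - 2/q.toReal| = 1 - 2/p.toReal := by
        have h1 : 1/q.toReal = 1 - 1/p.toReal := by linarith
        have h2 : 2/q.toReal = 2 - 2/p.toReal := by
          have : 2/q.toReal = 2 * (1/q.toReal) := by ring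
          rw [this, h1]; ring
        have h3 : 2/p.toReal ≤ 1 := by
          rw [div_le_one hptr0]; exact hp2r
        rw [abs_of_nonpos (by linarith)]
        linarith
      rw [hexp]
      simp only [lpnormE, if_neg hqtop, if_neg hptop]
      exact hHY
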